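/- For every natural number n ≥ 1, Σ_{k=1}^{n} 1/k² = ζ(2) - 1/n + 1/(2n²) + (1/n) Σ_{k=1}^{∞} (-1)^{k+1} [Σ_{l=1}^{k} (-1)^l B_{l+1} s(k,l)] / (n(n+1)(n+2)⋯(n+k)), with the series converging; its first terms are -1/(6n²(n+1)) - 1/(6n²(n+1)(n+2)) - ⋯. -/

import Mathlib

open Finset Real Filter

/-- Unsigned Stirling numbers of the first kind. -/
def stirling1 : ℕ → ℕ → ℕ
  | 0, 0 => 1
  | 0, _ + 1 => 0
  | _ + 1, 0 => 0
  | n + 1, k + 1 => n * stirling1 n (k + 1) + stirling1 n k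

/-- Signed Stirling numbers of the first kind, as reals. -/
noncomputable def s1 (k l : ℕ) : ℝ := (-1 : ℝ) ^ (k - l) * stirling1 k l

/-- Bernoulli number (with `B 1 = -1/2`) as a real. -/
noncomputable def B (m : ℕ) : ℝ := ((bernoulli m : ℚ) : ℝ)

/-- Rising factorial (Pochhammer symbol) `(x)_k = x(x+1)⋯(x+k-1)`. -/
noncomputable def rf (x : ℝ) (k : ℕ) : ℝ := ∏ i ∈ Finset.range k, (x + i)

/-!
The unsigned Stirling numbers `s(k+1, l)` are the coefficients of the rising factorial
`(X)_{k+1}`, so the inner sum is, up to sign, the umbral evaluation `L : X ^ i ↦ B_i` of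
`X · (X)_{k+1}`. Since `∑_{i<m} C(m,i) B_i = [m = 1]`, `L (p (X + 1)) = L p + p'(0)`; applied
to `(X - 1) · (X)_{k+1}`, whose shift is `(X)_{k+2}`, this gives
`L (X · (X)_{k+1}) = (k+1)! / ((k+2)(k+3))`. Hence the series is `-S(n)`, where
`S(x) = ∑_k A_k(x)` and `A_k(x) = (k+1)! / ((k+2)(k+3)(x)_{k+2})`.

Termwise, `(x+1) A_k(x) - x A_k(x+1)` telescopes in `k`, so `(x+1) S(x) - x S(x+1) = 1/(2x(x+1))`
and `D(x) = 1/x - 1/(2x²) + S(x)/x` satisfies `D(x) - D(x+1) = 1/(x+1)²`, just like the tail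
`∑_{m>n} 1/m²`. As both tend to `0`, they coincide.
-/

open Nat
open _root_.Polynomial hiding bernoulli sum_bernoulli

theorem stirling1_eq_stirlingFirst : ∀ n k, stirling1 n k = n.stirlingFirst k
  | 0, 0 | 0, _ + 1 | _ + 1, 0 => rfl
  | n + 1, k + 1 => by
    rw [stirling1, stirlingFirst_succ_succ, stirling1_eq_stirlingFirst n (k + 1),
      stirling1_eq_stirlingFirst n k]

theorem Polynomial.coeff_ascPochhammer {S : Type*} [Semiring S] (k l : ℕ) :
    (ascPochhammer S k).coeff l = (k.stirlingFirst l : S) := by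
  induction k generalizing l with
  | zero => cases l <;> simp [coeff_one]
  | succ k ih =>
    rw [ascPochhammer_succ_right, mul_add, coeff_add, coeff_mul_natCast]
    cases l with
    | zero => cases k <;> simp [ih]
    | succ l =>
      rw [coeff_mul_X, ih, ih, stirlingFirst_succ_succ, Nat.cast_add, Nat.cast_mul, Nat.cast_comm,
        add_comm]

noncomputable def bernoulliUmbral : ℚ[X] →ₗ[ℚ] ℚ :=
  lsum fun i => bernoulli i • LinearMap.id

theorem bernoulliUmbral_monomial (i : ℕ) (c : ℚ) :
    bernoulliUmbral (monomial i c) = c * bernoulli i := by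
  simp [bernoulliUmbral, mul_comm]

theorem bernoulliUmbral_eq_sum_range {p : ℚ[X]} {N : ℕ} (h : p.natDegree < N) :
    bernoulliUmbral p = ∑ i ∈ range N, p.coeff i * bernoulli i := by
  conv_lhs => rw [as_sum_range' p N h]
  simp only [map_sum, bernoulliUmbral_monomial]

theorem bernoulliUmbral_X_add_one_pow (m : ℕ) :
    bernoulliUmbral ((X + 1) ^ m) = bernoulli m + if m = 1 then 1 else 0 := by
  have hdeg : ((X + 1 : ℚ[X]) ^ m).natDegree < m + 1 := by
    rw [← C_1, natDegree_pow_X_add_C]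
    omega
  rw [bernoulliUmbral_eq_sum_range hdeg, sum_range_succ, ← sum_bernoulli]
  simp only [coeff_X_add_one_pow, Nat.choose_self, Nat.cast_one, mul_one, mul_comm]
  ring

theorem bernoulliUmbral_taylor_one (p : ℚ[X]) :
    bernoulliUmbral (taylor 1 p) = bernoulliUmbral p + p.coeff 1 := by
  suffices bernoulliUmbral ∘ₗ taylor 1 = bernoulliUmbral + lcoeff ℚ 1 from
    LinearMap.congr_fun this p
  refine lhom_ext' fun m => LinearMap.ext fun c => ?_
  simp only [LinearMap.comp_apply, taylor_monomial, map_one, ← smul_eq_C_mul, map_smul,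
    bernoulliUmbral_X_add_one_pow, LinearMap.add_apply, bernoulliUmbral_monomial, lcoeff_apply,
    coeff_monomial, smul_eq_mul]
  split_ifs <;> simp_all [mul_add]

theorem X_mul_ascPochhammer_succ (k : ℕ) :
    X * ascPochhammer ℚ (k + 1) =
      ascPochhammer ℚ (k + 2) - ((k + 1 : ℕ) : ℚ) • ascPochhammer ℚ (k + 1) := by
  rw [ascPochhammer_succ_right ℚ (k + 1), smul_eq_C_mul, C_eq_natCast]
  ring

theorem bernoulliUmbral_ascPochhammer_succ (k : ℕ) :
    bernoulliUmbral (ascPochhammer ℚ (k + 1)) = -(k ! : ℚ) / (k + 2) := by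
  have hshift : taylor 1 ((X - 1) * ascPochhammer ℚ (k + 1)) = ascPochhammer ℚ (k + 2) := by
    rw [taylor_mul, taylor_apply, taylor_apply, ascPochhammer_succ_left ℚ (k + 1)]
    simp
  have hsplit : (X - 1) * ascPochhammer ℚ (k + 1) =
      ascPochhammer ℚ (k + 2) - ((k + 2 : ℕ) : ℚ) • ascPochhammer ℚ (k + 1) := by
    rw [sub_mul, one_mul, X_mul_ascPochhammer_succ]
    push_cast
    module
  have hcoeff : ((X - 1) * ascPochhammer ℚ (k + 1)).coeff 1 = -(k ! : ℚ) := by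
    rw [hsplit, coeff_sub, coeff_smul, coeff_ascPochhammer, coeff_ascPochhammer,
      stirlingFirst_one_right, stirlingFirst_one_right, factorial_succ]
    push_cast
    ring
  have h := bernoulliUmbral_taylor_one ((X - 1) * ascPochhammer ℚ (k + 1))
  rw [hshift, hcoeff, hsplit, map_sub, map_smul, smul_eq_mul] at h
  field_simp
  push_cast at h
  linarith

theorem bernoulliUmbral_X_mul_ascPochhammer_succ (k : ℕ) :
    bernoulliUmbral (X * ascPochhammer ℚ (k + 1)) = (k + 1)! / ((k + 2) * (k + 3)) := by
  rw [X_mul_ascPochhammer_succ, map_sub, map_smul, smul_eq_mul,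
    bernoulliUmbral_ascPochhammer_succ, bernoulliUmbral_ascPochhammer_succ, factorial_succ]
  push_cast
  field_simp
  ring

theorem sum_stirlingFirst_mul_bernoulli (k : ℕ) :
    ∑ l ∈ Icc 1 (k + 1), ((k + 1).stirlingFirst l : ℚ) * bernoulli (l + 1) =
      (k + 1)! / ((k + 2) * (k + 3)) := by
  have hdeg : (X * ascPochhammer ℚ (k + 1)).natDegree < k + 3 := by
    rw [X_mul, natDegree_mul_X (monic_ascPochhammer ℚ (k + 1)).ne_zero, ascPochhammer_natDegree]
    omega
  rw [← bernoulliUmbral_X_mul_ascPochhammer_succ, bernoulliUmbral_eq_sum_range hdeg,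
    sum_range_succ', sum_range_succ', ← Ico_add_one_right_eq_Icc, sum_Ico_eq_sum_range]
  simp [X_mul, coeff_mul_X, coeff_ascPochhammer, Nat.add_comm 1]

open Topology

theorem rf_succ (x : ℝ) (k : ℕ) : rf x (k + 1) = rf x k * (x + k) :=
  prod_range_succ _ _

theorem rf_succ' (x : ℝ) (k : ℕ) : rf x (k + 1) = x * rf (x + 1) k := by
  rw [rf, prod_range_succ', mul_comm, rf]
  push_cast
  simp only [add_zero, add_assoc, add_comm (1 : ℝ)]

theorem rf_pos {x : ℝ} (hx : 0 < x) (k : ℕ) : 0 < rf x k :=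
  prod_pos fun _ _ => by positivity

theorem mul_factorial_le_rf {x : ℝ} (hx : 0 ≤ x) (k : ℕ) : x * k ! ≤ rf x (k + 1) := by
  rw [rf_succ', rf, ← prod_range_add_one_eq_factorial, Nat.cast_prod]
  gcongr with i
  push_cast
  linarith

noncomputable def stirlingTerm (x : ℝ) (k : ℕ) : ℝ :=
  (k + 1)! / ((k + 2) * (k + 3) * rf x (k + 2))

noncomputable def stirlingSeries (x : ℝ) : ℝ := ∑' k, stirlingTerm x k

theorem stirlingTerm_nonneg {x : ℝ} (hx : 0 < x) (k : ℕ) : 0 ≤ stirlingTerm x k := by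
  have := rf_pos hx (k + 2)
  unfold stirlingTerm
  positivity

theorem stirlingTerm_le {x : ℝ} (hx : 0 < x) (k : ℕ) :
    stirlingTerm x k ≤ x⁻¹ * (1 / ((k : ℝ) + 1) ^ 2) := by
  have hrf : x * (k + 1)! ≤ rf x (k + 2) := mul_factorial_le_rf hx.le (k + 1)
  calc stirlingTerm x k ≤ (k + 1)! / ((k + 2) * (k + 3) * (x * (k + 1)!)) := by
        unfold stirlingTerm; gcongr
    _ = x⁻¹ * (1 / ((k + 2) * (k + 3))) := by field_simp
    _ ≤ x⁻¹ * (1 / ((k : ℝ) + 1) ^ 2) := by gcongr; nlinarith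

theorem summable_one_div_add_one_sq : Summable fun k : ℕ => 1 / ((k : ℝ) + 1) ^ 2 := by
  simpa using (summable_nat_add_iff 1).mpr (Real.summable_one_div_nat_pow.mpr one_lt_two)

theorem summable_stirlingTerm {x : ℝ} (hx : 0 < x) : Summable (stirlingTerm x) :=
  (summable_one_div_add_one_sq.mul_left x⁻¹).of_nonneg_of_le (stirlingTerm_nonneg hx)
    (stirlingTerm_le hx)

theorem stirlingSeries_nonneg {x : ℝ} (hx : 0 < x) : 0 ≤ stirlingSeries x :=
  tsum_nonneg (stirlingTerm_nonneg hx)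

theorem stirlingSeries_le {x : ℝ} (hx : 0 < x) :
    stirlingSeries x ≤ x⁻¹ * ∑' k : ℕ, 1 / ((k : ℝ) + 1) ^ 2 := by
  rw [← tsum_mul_left]
  exact (summable_stirlingTerm hx).tsum_le_tsum (stirlingTerm_le hx)
    (summable_one_div_add_one_sq.mul_left x⁻¹)

noncomputable def stirlingAntidiff (x : ℝ) (k : ℕ) : ℝ := (k + 1)! / ((k + 2) * rf x (k + 2))

theorem stirlingTerm_telescoping {x : ℝ} (hx : 0 < x) (k : ℕ) :
    (x + 1) * stirlingTerm x k - x * stirlingTerm (x + 1) k =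
      stirlingAntidiff x k - stirlingAntidiff x (k + 1) := by
  have hrf := (rf_pos hx (k + 2)).ne'
  have hshift : rf (x + 1) (k + 2) = rf x (k + 2) * (x + (k + 2 : ℕ)) / x := by
    rw [eq_div_iff hx.ne', mul_comm, ← rf_succ', rf_succ]
  rw [stirlingTerm, stirlingTerm, stirlingAntidiff, stirlingAntidiff, hshift,
    show k + 1 + 2 = k + 2 + 1 by ring, rf_succ x (k + 2), factorial_succ (k + 1)]
  push_cast
  field_simp
  ring

theorem stirlingAntidiff_zero (x : ℝ) :
    stirlingAntidiff x 0 = 1 / (2 * x * (x + 1)) := by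
  rw [stirlingAntidiff, rf]
  simp only [prod_range_succ, range_zero, prod_empty]
  push_cast
  ring

theorem tendsto_stirlingAntidiff {x : ℝ} (hx : 0 < x) :
    Tendsto (stirlingAntidiff x) atTop (𝓝 0) := by
  refine squeeze_zero (fun k => ?_) (fun k => ?_)
    (by simpa using tendsto_one_div_add_atTop_nhds_zero_nat.const_mul x⁻¹)
  · have := rf_pos hx (k + 2)
    unfold stirlingAntidiff
    positivity
  · have hrf : x * (k + 1)! ≤ rf x (k + 2) := mul_factorial_le_rf hx.le (k + 1)
    calc stirlingAntidiff x k ≤ (k + 1)! / ((k + 2) * (x * (k + 1)!)) := by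
          unfold stirlingAntidiff; gcongr
      _ = x⁻¹ * ((k : ℝ) + 2)⁻¹ := by field_simp
      _ ≤ x⁻¹ * ((k : ℝ) + 1)⁻¹ := by gcongr; linarith

theorem stirlingSeries_recurrence {x : ℝ} (hx : 0 < x) :
    (x + 1) * stirlingSeries x - x * stirlingSeries (x + 1) = 1 / (2 * x * (x + 1)) := by
  have hsum := ((summable_stirlingTerm hx).hasSum.mul_left (x + 1)).sub
    ((summable_stirlingTerm (by linarith : 0 < x + 1)).hasSum.mul_left x)
  simp only [stirlingTerm_telescoping hx] at hsum
  refine (hsum.unique ?_).trans (stirlingAntidiff_zero x)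
  rw [hsum.summable.hasSum_iff_tendsto_nat]
  simp only [sum_range_sub']
  simpa using tendsto_const_nhds.sub (tendsto_stirlingAntidiff hx)

noncomputable def stirlingTail (x : ℝ) : ℝ := 1 / x - 1 / (2 * x ^ 2) + stirlingSeries x / x

theorem stirlingTail_sub_add_one {x : ℝ} (hx : 0 < x) :
    stirlingTail x - stirlingTail (x + 1) = 1 / (x + 1) ^ 2 := by
  have h := stirlingSeries_recurrence hx
  have hx1 : x + 1 ≠ 0 := by positivity
  unfold stirlingTail
  field_simp at h ⊢
  linear_combination h

theorem tendsto_stirlingTail : Tendsto stirlingTail atTop (𝓝 0) := by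
  have hinv : Tendsto (fun x : ℝ => x⁻¹) atTop (𝓝 0) := tendsto_inv_atTop_zero
  have hseries : Tendsto (fun x => stirlingSeries x / x) atTop (𝓝 0) := by
    refine squeeze_zero' ?_ ?_
      (by simpa using (hinv.pow 2).const_mul (∑' k : ℕ, 1 / ((k : ℝ) + 1) ^ 2))
    · filter_upwards [eventually_gt_atTop 0] with x hx
      exact div_nonneg (stirlingSeries_nonneg hx) hx.le
    · filter_upwards [eventually_gt_atTop 0] with x hx
      rw [div_eq_mul_inv]
      calc stirlingSeries x * x⁻¹
          ≤ (x⁻¹ * ∑' k : ℕ, 1 / ((k : ℝ) + 1) ^ 2) * x⁻¹ := by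
            gcongr; exact stirlingSeries_le hx
        _ = _ := by ring
  have heq : stirlingTail = fun x => x⁻¹ - x⁻¹ ^ 2 / 2 + stirlingSeries x / x := by
    funext x
    rw [stirlingTail]
    ring
  rw [heq]
  simpa using (hinv.sub ((hinv.pow 2).div_const 2)).add hseries

theorem eq_of_tendsto_of_forall_ge_succ_eq {α : Type*} [TopologicalSpace α] [T2Space α]
    {u : ℕ → α} {N : ℕ} {a : α} (hu : ∀ m ≥ N, u (m + 1) = u m)
    (h : Tendsto u atTop (𝓝 a)) : u N = a := by
  refine tendsto_nhds_unique (tendsto_atTop_of_eventually_const (i₀ := N) fun m hm => ?_) h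
  induction m, hm using Nat.le_induction with
  | base => rfl
  | succ m hm ih => rw [hu m hm, ih]

theorem sum_Icc_one_eq_sum_range {M : Type*} [AddCommMonoid M] (f : ℕ → M) (n : ℕ) :
    ∑ k ∈ Icc 1 n, f k = ∑ k ∈ range n, f (k + 1) := by
  rw [← Ico_add_one_right_eq_Icc, sum_Ico_eq_sum_range]
  simp [add_comm]

theorem tsum_sub_sum_Icc_eq_stirlingTail {n : ℕ} (hn : 1 ≤ n) :
    (∑' k : ℕ, 1 / ((k : ℝ) + 1) ^ 2) - ∑ k ∈ Icc 1 n, 1 / (k : ℝ) ^ 2 =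
      stirlingTail n := by
  refine sub_eq_zero.mp (eq_of_tendsto_of_forall_ge_succ_eq (u := fun m : ℕ =>
    (∑' k : ℕ, 1 / ((k : ℝ) + 1) ^ 2) - ∑ k ∈ Icc 1 m, 1 / (k : ℝ) ^ 2 - stirlingTail m)
    (fun m hm => ?_) ?_)
  · have := stirlingTail_sub_add_one (x := m) (Nat.cast_pos.mpr (hn.trans hm))
    simp only [sum_Icc_succ_top (by omega : 1 ≤ m + 1), Nat.cast_add, Nat.cast_one]
    linarith
  · have hpartial : Tendsto (fun m : ℕ => ∑ k ∈ Icc 1 m, 1 / (k : ℝ) ^ 2) atTop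
        (𝓝 (∑' k : ℕ, 1 / ((k : ℝ) + 1) ^ 2)) := by
      simpa only [sum_Icc_one_eq_sum_range, Nat.cast_add, Nat.cast_one] using
        summable_one_div_add_one_sq.hasSum.tendsto_sum_nat
    have := ((tendsto_const_nhds (x := ∑' k : ℕ, 1 / ((k : ℝ) + 1) ^ 2)).sub hpartial).sub
      (tendsto_stirlingTail.comp tendsto_natCast_atTop_atTop)
    rwa [sub_self, sub_zero] at this

theorem sum_neg_one_pow_mul_B_mul_s1 (k : ℕ) :
    ∑ l ∈ Icc 1 (k + 1), (-1 : ℝ) ^ l * B (l + 1) * s1 (k + 1) l =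
      (-1) ^ (k + 1) * ((k + 1)! / ((k + 2) * (k + 3))) := by
  have h := congrArg (fun q : ℚ => (q : ℝ)) (sum_stirlingFirst_mul_bernoulli k)
  push_cast at h
  rw [← h, mul_sum]
  refine sum_congr rfl fun l hl => ?_
  rw [B, s1, stirling1_eq_stirlingFirst, mul_mul_mul_comm, ← pow_add,
    Nat.add_sub_cancel' (mem_Icc.mp hl).2]
  ring

theorem seriesTerm_eq_neg_stirlingTerm (x : ℝ) (k : ℕ) :
    (-1 : ℝ) ^ (k + 2) * (∑ l ∈ Icc 1 (k + 1), (-1 : ℝ) ^ l * B (l + 1) * s1 (k + 1) l) /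
      ∏ i ∈ range (k + 2), (x + i) = -stirlingTerm x k := by
  rw [sum_neg_one_pow_mul_B_mul_s1, stirlingTerm, rf, ← mul_assoc, ← pow_add,
    (by ring : k + 2 + (k + 1) = 2 * (k + 1) + 1), pow_succ, pow_mul]
  simp [div_div, neg_div]

/-- Another convergent Stirling series for the partial sums of `ζ(2)`. -/
theorem partial_zeta_two_stirling_series' (n : ℕ) (hn : 1 ≤ n) :
    Summable (fun k : ℕ => (-1 : ℝ) ^ (k + 2) *
        (∑ l ∈ Finset.Icc 1 (k + 1), (-1 : ℝ) ^ l * B (l + 1) * s1 (k + 1) l) /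
          ∏ i ∈ Finset.range (k + 2), ((n : ℝ) + i)) ∧
      ∑ k ∈ Finset.Icc 1 n, (1 : ℝ) / (k : ℝ) ^ 2 =
        (∑' k : ℕ, (1 : ℝ) / ((k : ℝ) + 1) ^ 2) - 1 / (n : ℝ) + 1 / (2 * (n : ℝ) ^ 2) +
          (1 / (n : ℝ)) * ∑' k : ℕ, (-1 : ℝ) ^ (k + 2) *
            (∑ l ∈ Finset.Icc 1 (k + 1), (-1 : ℝ) ^ l * B (l + 1) * s1 (k + 1) l) /
              ∏ i ∈ Finset.range (k + 2), ((n : ℝ) + i) := by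
  have hn' : (0 : ℝ) < n := by exact_mod_cast hn
  simp only [seriesTerm_eq_neg_stirlingTerm, tsum_neg]
  refine ⟨(summable_stirlingTerm hn').neg, ?_⟩
  have h := tsum_sub_sum_Icc_eq_stirlingTail hn
  have hS : 1 / (n : ℝ) * -∑' k, stirlingTerm n k = -(stirlingSeries n / n) := by
    rw [stirlingSeries]
    ring
  rw [stirlingTail] at h
  linarith
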